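/- In the counter-machine model, consider the program that performs "inc c; add R to d" once, then loops "inc c; add R to d" a nondeterministic number of times, then halts (with no zero requirements), starting from counters b = R (set by R increments), c = 0, d = 0. The set of final valuations of (b, c, d) over all complete runs is exactly {(R, c, d) : c > 0, d = c·R}. -/

import Mathlib

/-! A model of counter programs (as in the paper): a program is a list of commands over a
finite set of counters ranging over `ℕ`, with increment, blocking decrement, nondeterministic
jump and a terminal halt command checking that listed counters are zero. -/

/-- Commands of a counter program over counter type `C`. -/
inductive Cmd (C : Type) where
  | inc (x : C)
  | dec (x : C)
  | jmp (L L' : ℕ)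
  | halt (Z : List C)

/-- One step of execution. Decrement blocks at `0`; a jump nondeterministically goes to
either of its two targets. -/
inductive Step {C : Type} [DecidableEq C] (P : List (Cmd C)) :
    ℕ × (C → ℕ) → ℕ × (C → ℕ) → Prop where
  | inc {pc : ℕ} {v : C → ℕ} {x : C} (h : P[pc]? = some (.inc x)) :
      Step P (pc, v) (pc + 1, Function.update v x (v x + 1))
  | dec {pc : ℕ} {v : C → ℕ} {x : C} (h : P[pc]? = some (.dec x)) (hx : 0 < v x) :
      Step P (pc, v) (pc + 1, Function.update v x (v x - 1))
  | jmp {pc pc' : ℕ} {v : C → ℕ} {L L' : ℕ} (h : P[pc]? = some (.jmp L L'))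
      (h' : pc' = L ∨ pc' = L') : Step P (pc, v) (pc', v)

/-- A configuration is halted if its command is `halt Z` and all counters in `Z` are zero. -/
def Halted {C : Type} (P : List (Cmd C)) (cfg : ℕ × (C → ℕ)) : Prop :=
  ∃ Z : List C, P[cfg.1]? = some (.halt Z) ∧ ∀ x ∈ Z, cfg.2 x = 0

/-- The trivial amplifier by `R` of Example 3: counters `b = 0`, `c = 1`, `d = 2`; code
`add b R; inc c; add d R; loop { inc c; add d R }; halt` (no zero requirements). -/
def trivialAmplifier (R : ℕ) : List (Cmd (Fin 3)) :=
  List.replicate R (.inc 0) ++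
  [.inc 1] ++ List.replicate R (.inc 2) ++
  [.jmp (2 * R + 2) (3 * R + 4), .inc 1] ++ List.replicate R (.inc 2) ++
  [.jmp (2 * R + 1) (2 * R + 1),
   .halt []]

section Aux

lemma get_cons {α} (a : α) (l : List α) (m : ℕ) :
    (a :: l)[m]? = if m = 0 then some a else l[(m-1)]? := by
  cases m <;> simp

lemma get_repl {α} (a : α) (n : ℕ) (l : List α) (m : ℕ) :
    (List.replicate n a ++ l)[m]? = if m < n then some a else l[(m - n)]? := by
  by_cases h : m < n
  · rw [if_pos h, List.getElem?_append_left (by simpa using h)]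
    simp [List.getElem?_replicate, h]
  · rw [if_neg h, List.getElem?_append_right (by simpa using h)]
    simp

lemma ta_eq (R : ℕ) : trivialAmplifier R =
    List.replicate R (.inc 0) ++ (.inc 1 ::
      (List.replicate R (.inc 2) ++ (.jmp (2*R+2) (3*R+4) :: .inc 1 ::
        (List.replicate R (.inc 2) ++ [.jmp (2*R+1) (2*R+1), .halt []])))) := by
  simp [trivialAmplifier]

variable {R pc : ℕ}

lemma getA (h : pc < R) : (trivialAmplifier R)[pc]? = some (.inc 0) := by
  rw [ta_eq, get_repl, if_pos h]

lemma getR : (trivialAmplifier R)[R]? = some (.inc 1) := by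
  rw [ta_eq, get_repl, if_neg (by omega), get_cons, if_pos (by omega)]

lemma getB (h1 : R + 1 ≤ pc) (h2 : pc ≤ 2*R) :
    (trivialAmplifier R)[pc]? = some (.inc 2) := by
  rw [ta_eq, get_repl, if_neg (by omega), get_cons, if_neg (by omega),
    get_repl, if_pos (by omega)]

lemma getJ1 : (trivialAmplifier R)[(2*R+1)]? = some (.jmp (2*R+2) (3*R+4)) := by
  rw [ta_eq, get_repl, if_neg (by omega), get_cons, if_neg (by omega),
    get_repl, if_neg (by omega), get_cons, if_pos (by omega)]

lemma getI : (trivialAmplifier R)[(2*R+2)]? = some (.inc 1) := by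
  rw [ta_eq, get_repl, if_neg (by omega), get_cons, if_neg (by omega),
    get_repl, if_neg (by omega), get_cons, if_neg (by omega), get_cons, if_pos (by omega)]

lemma getC (h1 : 2*R + 3 ≤ pc) (h2 : pc ≤ 3*R + 2) :
    (trivialAmplifier R)[pc]? = some (.inc 2) := by
  rw [ta_eq, get_repl, if_neg (by omega), get_cons, if_neg (by omega),
    get_repl, if_neg (by omega), get_cons, if_neg (by omega), get_cons, if_neg (by omega),
    get_repl, if_pos (by omega)]

lemma getJ2 : (trivialAmplifier R)[(3*R+3)]? = some (.jmp (2*R+1) (2*R+1)) := by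
  rw [ta_eq, get_repl, if_neg (by omega), get_cons, if_neg (by omega),
    get_repl, if_neg (by omega), get_cons, if_neg (by omega), get_cons, if_neg (by omega),
    get_repl, if_neg (by omega), get_cons, if_pos (by omega)]

lemma getH : (trivialAmplifier R)[(3*R+4)]? = some (.halt []) := by
  rw [ta_eq, get_repl, if_neg (by omega), get_cons, if_neg (by omega),
    get_repl, if_neg (by omega), get_cons, if_neg (by omega), get_cons, if_neg (by omega),
    get_repl, if_neg (by omega), get_cons, if_neg (by omega), get_cons, if_pos (by omega)]

end Aux

/-- Invariant of reachable configurations. -/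
def AmpInv (R pc : ℕ) (v : Fin 3 → ℕ) : Prop :=
  (pc ≤ R ∧ v 0 = pc ∧ v 1 = 0 ∧ v 2 = 0) ∨
  (R + 1 ≤ pc ∧ pc ≤ 2*R ∧ v 0 = R ∧ v 1 = 1 ∧ v 2 = pc - (R+1)) ∨
  ((pc = 2*R+1 ∨ pc = 2*R+2 ∨ pc = 3*R+4) ∧
    ∃ k, 0 < k ∧ v 0 = R ∧ v 1 = k ∧ v 2 = k * R) ∨
  (2*R+3 ≤ pc ∧ pc ≤ 3*R+3 ∧
    ∃ k, 0 < k ∧ v 0 = R ∧ v 1 = k + 1 ∧ v 2 = k * R + (pc - (2*R+3)))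

lemma inv_step {R : ℕ} (hR : 0 < R) {a b : ℕ × (Fin 3 → ℕ)}
    (h : Step (trivialAmplifier R) a b) (ha : AmpInv R a.1 a.2) : AmpInv R b.1 b.2 := by
  cases h with
  | @inc pc v x h =>
    dsimp only at ha ⊢
    rcases ha with ⟨hpc, h0, h1, h2⟩ | ⟨hp1, hp2, h0, h1, h2⟩ |
        ⟨hpc, k, hk, h0, h1, h2⟩ | ⟨hp1, hp2, k, hk, h0, h1, h2⟩
    · rcases Nat.lt_or_ge pc R with hlt | hge
      · rw [getA hlt] at h
        simp only [Option.some.injEq, Cmd.inc.injEq] at h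
        subst h
        left
        refine ⟨by omega, ?_, ?_, ?_⟩ <;>
          simp [Function.update_apply, h0, h1, h2]
      · have hpR : pc = R := le_antisymm hpc hge
        rw [hpR, getR] at h
        simp only [Option.some.injEq, Cmd.inc.injEq] at h
        subst h
        right; left
        refine ⟨by omega, by omega, ?_, ?_, ?_⟩ <;>
          simp [Function.update_apply, h0, h1, h2] <;> omega
    · rw [getB hp1 hp2] at h
      simp only [Option.some.injEq, Cmd.inc.injEq] at h
      subst h
      rcases Nat.lt_or_ge pc (2*R) with hlt | hge
      · right; left
        refine ⟨by omega, by omega, ?_, ?_, ?_⟩ <;>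
          simp [Function.update_apply, h0, h1, h2] <;> omega
      · have : pc = 2*R := by omega
        subst this
        right; right; left
        refine ⟨by omega, 1, by omega, ?_, ?_, ?_⟩ <;>
          simp [Function.update_apply, h0, h1, h2] <;> omega
    · rcases hpc with rfl | rfl | rfl
      · rw [getJ1] at h; simp at h
      · rw [getI] at h
        simp only [Option.some.injEq, Cmd.inc.injEq] at h
        subst h
        right; right; right
        refine ⟨by omega, by omega, k, hk, ?_, ?_, ?_⟩ <;>
          simp [Function.update_apply, h0, h1, h2]
      · rw [getH] at h; simp at h
    · rcases Nat.lt_or_ge pc (3*R+3) with hlt | hge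
      · rw [getC hp1 (by omega)] at h
        simp only [Option.some.injEq, Cmd.inc.injEq] at h
        subst h
        right; right; right
        refine ⟨by omega, by omega, k, hk, ?_, ?_, ?_⟩ <;>
          simp [Function.update_apply, h0, h1, h2] <;> omega
      · have : pc = 3*R+3 := by omega
        subst this
        rw [getJ2] at h; simp at h
  | @dec pc v x h hx =>
    exfalso
    dsimp only at ha
    rcases ha with ⟨hpc, -⟩ | ⟨hp1, hp2, -⟩ | ⟨hpc, -⟩ | ⟨hp1, hp2, -⟩
    · rcases Nat.lt_or_ge pc R with hlt | hge
      · rw [getA hlt] at h; simp at h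
      · have : pc = R := by omega
        subst this; rw [getR] at h; simp at h
    · rw [getB hp1 hp2] at h; simp at h
    · rcases hpc with rfl | rfl | rfl
      · rw [getJ1] at h; simp at h
      · rw [getI] at h; simp at h
      · rw [getH] at h; simp at h
    · rcases Nat.lt_or_ge pc (3*R+3) with hlt | hge
      · rw [getC hp1 (by omega)] at h; simp at h
      · have : pc = 3*R+3 := by omega
        subst this; rw [getJ2] at h; simp at h
  | @jmp pc pc' v L L' h h' =>
    dsimp only at ha ⊢
    rcases ha with ⟨hpc, h0, h1, h2⟩ | ⟨hp1, hp2, h0, h1, h2⟩ |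
        ⟨hpc, k, hk, h0, h1, h2⟩ | ⟨hp1, hp2, k, hk, h0, h1, h2⟩
    · rcases Nat.lt_or_ge pc R with hlt | hge
      · rw [getA hlt] at h; simp at h
      · have : pc = R := by omega
        subst this; rw [getR] at h; simp at h
    · rw [getB hp1 hp2] at h; simp at h
    · rcases hpc with rfl | rfl | rfl
      · rw [getJ1] at h
        simp only [Option.some.injEq, Cmd.jmp.injEq] at h
        obtain ⟨rfl, rfl⟩ := h
        right; right; left
        exact ⟨by omega, k, hk, h0, h1, h2⟩
      · rw [getI] at h; simp at h
      · rw [getH] at h; simp at h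
    · rcases Nat.lt_or_ge pc (3*R+3) with hlt | hge
      · rw [getC hp1 (by omega)] at h; simp at h
      · have : pc = 3*R+3 := by omega
        subst this
        rw [getJ2] at h
        simp only [Option.some.injEq, Cmd.jmp.injEq] at h
        obtain ⟨rfl, rfl⟩ := h
        have hpc' : pc' = 2*R+1 := by tauto
        subst hpc'
        right; right; left
        refine ⟨by omega, k + 1, by omega, h0, h1, ?_⟩
        rw [h2, Nat.add_mul, one_mul]
        omega

lemma run_incs {C : Type} [DecidableEq C] (P : List (Cmd C)) (x : C) (p n : ℕ)
    (h : ∀ j < n, P[(p + j)]? = some (.inc x)) (v : C → ℕ) :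
    Relation.ReflTransGen (Step P) (p, v)
      (p + n, Function.update v x (v x + n)) := by
  induction n with
  | zero => simpa using Relation.ReflTransGen.refl
  | succ n ih =>
    refine (ih fun j hj => h j (by omega)).tail ?_
    have := Step.inc (P := P) (v := Function.update v x (v x + n)) (h n (by omega))
    simpa [Function.update_idem, Function.update_self, add_assoc] using this

lemma upd0 (a b c t : ℕ) : Function.update ![a,b,c] 0 t = ![t,b,c] := by
  funext i; fin_cases i <;> simp [Function.update_apply]

lemma upd1 (a b c t : ℕ) : Function.update ![a,b,c] 1 t = ![a,t,c] := by
  funext i; fin_cases i <;> simp [Function.update_apply]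

lemma upd2 (a b c t : ℕ) : Function.update ![a,b,c] 2 t = ![a,b,t] := by
  funext i; fin_cases i <;> simp [Function.update_apply]

lemma reach_loop {R : ℕ} (hR : 0 < R) :
    Relation.ReflTransGen (Step (trivialAmplifier R)) (0, fun _ => 0)
      (2*R+1, ![R, 1, R]) := by
  have e0 : (fun _ => 0 : Fin 3 → ℕ) = ![0,0,0] := by funext i; fin_cases i <;> rfl
  rw [e0]
  have s1 := run_incs (trivialAmplifier R) 0 0 R (fun j hj => getA (by omega)) ![0,0,0]
  simp only [upd0, Matrix.cons_val_zero, Nat.zero_add] at s1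
  have s2 : Step (trivialAmplifier R) (R, ![(R:ℕ),0,0]) (R+1, ![R,1,0]) := by
    have := Step.inc (P := trivialAmplifier R) (v := ![(R:ℕ),0,0]) (getR (R := R))
    simpa [upd1] using this
  have s3 := run_incs (trivialAmplifier R) 2 (R+1) R
      (fun j hj => getB (by omega) (by omega)) ![R,1,0]
  simp only [upd2] at s3
  norm_num [Matrix.cons_val_two] at s3
  have e : R+1+R = 2*R+1 := by omega
  rw [e] at s3
  exact (s1.tail s2).trans s3

lemma loop {R : ℕ} (hR : 0 < R) (m : ℕ) :
    Relation.ReflTransGen (Step (trivialAmplifier R)) (2*R+1, ![R, 1, R])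
      (2*R+1, ![R, m+1, m*R + R]) := by
  induction m with
  | zero => simpa using Relation.ReflTransGen.refl
  | succ m ih =>
    refine ih.trans ?_
    have s1 : Step (trivialAmplifier R) (2*R+1, ![(R:ℕ), m+1, m*R+R])
        (2*R+2, ![R, m+1, m*R+R]) := Step.jmp getJ1 (Or.inl rfl)
    have s2 : Step (trivialAmplifier R) (2*R+2, ![(R:ℕ), m+1, m*R+R])
        (2*R+3, ![R, m+1+1, m*R+R]) := by
      have := Step.inc (P := trivialAmplifier R) (v := ![(R:ℕ), m+1, m*R+R]) (getI (R := R))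
      simpa [upd1] using this
    have s3 := run_incs (trivialAmplifier R) 2 (2*R+3) R
        (fun j hj => getC (by omega) (by omega)) ![R, m+1+1, m*R+R]
    simp only [upd2] at s3
    norm_num at s3
    have e : 2*R+3+R = 3*R+3 := by omega
    rw [e] at s3
    have s4 : Step (trivialAmplifier R) (3*R+3, ![(R:ℕ), m+1+1, m*R+R+R])
        (2*R+1, ![R, m+1+1, m*R+R+R]) := Step.jmp getJ2 (Or.inl rfl)
    have efin : (m+1)*R + R = m*R+R+R := by rw [Nat.add_mul, one_mul]
    rw [show m+1+1 = m+2 from rfl, efin]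
    exact (((Relation.ReflTransGen.single s1).tail s2).trans s3).tail s4


/-- Example 3: the set of final valuations of `(b, c, d)` over all complete runs of the
trivial amplifier by `R` is exactly `{(R, c, d) : c > 0, d = c·R}`. -/
theorem stmt13 (R : ℕ) (hR : 0 < R) :
    {t : ℕ × ℕ × ℕ | ∃ cfg : ℕ × (Fin 3 → ℕ),
        Relation.ReflTransGen (Step (trivialAmplifier R)) (0, fun _ => 0) cfg ∧
        Halted (trivialAmplifier R) cfg ∧
        t = (cfg.2 0, cfg.2 1, cfg.2 2)} =
    {t : ℕ × ℕ × ℕ | t.1 = R ∧ 0 < t.2.1 ∧ t.2.2 = t.2.1 * R} := by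
  ext t
  simp only [Set.mem_setOf_eq]
  constructor
  · rintro ⟨⟨pc, v⟩, hrun, ⟨Z, hZ, -⟩, rfl⟩
    have hinv : AmpInv R pc v := by
      have : ∀ cfg : ℕ × (Fin 3 → ℕ),
          Relation.ReflTransGen (Step (trivialAmplifier R)) (0, fun _ => 0) cfg →
          AmpInv R cfg.1 cfg.2 := by
        intro cfg h
        induction h with
        | refl => exact Or.inl ⟨by omega, rfl, rfl, rfl⟩
        | tail _ hstep ih => exact inv_step hR hstep ih
      exact this (pc, v) hrun
    dsimp only at hZ ⊢
    rcases hinv with ⟨hpc, h0, h1, h2⟩ | ⟨hp1, hp2, h0, h1, h2⟩ |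
        ⟨hpc, k, hk, h0, h1, h2⟩ | ⟨hp1, hp2, k, hk, h0, h1, h2⟩
    · rcases Nat.lt_or_ge pc R with hlt | hge
      · rw [getA hlt] at hZ; simp at hZ
      · have : pc = R := by omega
        subst this; rw [getR] at hZ; simp at hZ
    · rw [getB hp1 hp2] at hZ; simp at hZ
    · rcases hpc with rfl | rfl | rfl
      · rw [getJ1] at hZ; simp at hZ
      · rw [getI] at hZ; simp at hZ
      · exact ⟨h0, by omega, by rw [h1, h2]⟩
    · rcases Nat.lt_or_ge pc (3*R+3) with hlt | hge
      · rw [getC hp1 (by omega)] at hZ; simp at hZ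
      · have : pc = 3*R+3 := by omega
        subst this; rw [getJ2] at hZ; simp at hZ
  · obtain ⟨b, c, d⟩ := t
    rintro ⟨h1, hc, h3⟩
    dsimp only at h1 hc h3 ⊢
    subst h1
    subst h3
    obtain ⟨m, rfl⟩ : ∃ m, c = m + 1 := ⟨c - 1, by omega⟩
    refine ⟨(3*b+4, ![b, m+1, (m+1)*b]), ?_, ⟨[], getH, by simp⟩, by simp⟩
    have hrun := (reach_loop hR).trans (loop hR m)
    have efin : m*b + b = (m+1)*b := by rw [Nat.add_mul, one_mul]
    rw [efin] at hrun
    exact hrun.tail (Step.jmp getJ1 (Or.inr rfl))
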